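/- arXiv:2210.08300 — 2 statements merged into one kernel-verified Lean document; each statement's English description precedes it below -/
import Mathlib

section
/- Let m be a positive integer and let k be a positive integer such that 2m² < ∏_{q prime, q < k} q. Then the covering number of the point-line incidence matrix M is at most k⁴: there exists a family of at most k⁴ combinatorial rectangles (products P × L with P a set of points and L a set of lines), each of which is an all-one submatrix of M, whose union contains every one-entry of M. -/
/-- `p` is a valid point/line index: `p ∈ [m] × [2m²]`. -/
def InRange (m : ℕ) (p : ℕ × ℕ) : Prop :=
  1 ≤ p.1 ∧ p.1 ≤ m ∧ 1 ≤ p.2 ∧ p.2 ≤ 2 * m ^ 2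

/-- The primorialLT: the product of all primes strictly less than `k`. -/
def primorialLT (k : ℕ) : ℕ :=
  ∏ q ∈ (Finset.range k).filter Nat.Prime, q

lemma aux_dvd (k : ℕ) (hk : 4 ≤ k) (d : ℕ) (hd : d ≠ 0)
    (h4 : 4 ∣ d) (hp : ∀ q ∈ (Finset.range k).filter Nat.Prime, q ∣ d) :
    2 * primorialLT k ≤ d := by
  classical
  set s := (Finset.range k).filter Nat.Prime with hs
  have h2s : 2 ∈ s := by
    simp [hs, Nat.prime_two]; omega
  set t := ∏ q ∈ s.erase 2, q with ht
  have hPt : primorialLT k = 2 * t := by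
    rw [primorialLT, ← hs, ← Finset.mul_prod_erase s _ h2s]
  have htdvd : t ∣ d :=
    Finset.prod_primes_dvd d
      (fun q hq => (Finset.mem_filter.1 (Finset.mem_of_mem_erase hq)).2.prime)
      (fun q hq => hp q (Finset.mem_of_mem_erase hq))
  have htodd : Odd t := by
    rw [Nat.odd_iff, ← Nat.not_even_iff, even_iff_two_dvd]
    intro h2t
    obtain ⟨q, hq, h2q⟩ := (Nat.Prime.prime Nat.prime_two).dvd_finset_prod_iff _ |>.1 h2t
    have hqp := (Finset.mem_filter.1 (Finset.mem_of_mem_erase hq)).2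
    have : q = 2 := ((Nat.prime_dvd_prime_iff_eq Nat.prime_two hqp).1 h2q).symm
    exact Finset.ne_of_mem_erase hq this
  have hcop : Nat.Coprime 4 t := by
    have : Nat.Coprime 2 t := htodd.coprime_two_left
    have h4 : (4 : ℕ) = 2 ^ 2 := by norm_num
    rw [h4]
    exact Nat.Coprime.pow_left 2 this
  have : 4 * t ∣ d := hcop.mul_dvd_of_dvd_of_dvd h4 htdvd
  have hle : 4 * t ≤ d := Nat.le_of_dvd (Nat.pos_of_ne_zero hd) this
  omega

/-- If `2m²` is smaller than the product of all primes less than `k`, then the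
covering number of `M` is at most `k⁴`: there is a family of at most `k⁴`
combinatorial rectangles `P × L`, each an all-one submatrix of `M`, covering all
one-entries of `M`. -/
theorem covering_number_le (m k : ℕ) (hm : 1 ≤ m) (hk : 1 ≤ k)
    (hprim : 2 * m ^ 2 < primorialLT k) :
    ∃ R : Finset (Set (ℕ × ℕ) × Set (ℕ × ℕ)),
      R.card ≤ k ^ 4 ∧
      -- each rectangle is an all-one submatrix of M
      (∀ r ∈ R, (∀ p ∈ r.1, InRange m p) ∧ (∀ ℓ ∈ r.2, InRange m ℓ) ∧
        ∀ p ∈ r.1, ∀ ℓ ∈ r.2, ℓ.1 * p.1 + ℓ.2 ≠ p.2) ∧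
      -- the rectangles cover all one-entries of M
      (∀ p ℓ : ℕ × ℕ, InRange m p → InRange m ℓ → ℓ.1 * p.1 + ℓ.2 ≠ p.2 →
        ∃ r ∈ R, p ∈ r.1 ∧ ℓ ∈ r.2) := by
  classical
  have hm2 : 1 ≤ m ^ 2 := Nat.one_le_pow 2 m hm
  have hk4 : 4 ≤ k := by
    by_contra h
    push_neg at h
    interval_cases k
    · rw [show primorialLT 1 = 1 from by decide] at hprim; omega
    · rw [show primorialLT 2 = 1 from by decide] at hprim; omega
    · rw [show primorialLT 3 = 2 from by decide] at hprim; omega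
  set s : Finset ℕ := (Finset.range k).filter Nat.Prime with hs
  set N : Finset ℕ := insert 4 s with hN
  set f : ℕ × ℕ × ℕ → Set (ℕ × ℕ) × Set (ℕ × ℕ) := fun t =>
    ({p | InRange m p ∧ p.1 % t.1 = t.2.1 ∧ p.2 % t.1 = t.2.2},
     {l | InRange m l ∧ (l.1 * t.2.1 + l.2) % t.1 ≠ t.2.2}) with hf
  refine ⟨(N ×ˢ Finset.range k ×ˢ Finset.range k).image f, ?_, ?_, ?_⟩
  · calc ((N ×ˢ Finset.range k ×ˢ Finset.range k).image f).card
        ≤ (N ×ˢ Finset.range k ×ˢ Finset.range k).card := Finset.card_image_le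
      _ = N.card * (k * k) := by simp [Finset.card_product]
      _ ≤ (k + 1) * (k * k) := by
          have : N.card ≤ k + 1 := by
            calc N.card ≤ s.card + 1 := Finset.card_insert_le _ _
              _ ≤ k + 1 := by
                  have hsc : s.card ≤ k := by
                    rw [hs]
                    simpa using Finset.card_filter_le (Finset.range k) Nat.Prime
                  omega
          exact Nat.mul_le_mul_right _ this
      _ ≤ k * k * (k * k) := Nat.mul_le_mul_right _ (by nlinarith)
      _ = k ^ 4 := by ring
  · intro r hr
    simp only [Finset.mem_image, Finset.mem_product] at hr
    obtain ⟨⟨n, i, j⟩, _, rfl⟩ := hr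
    refine ⟨fun p hp => hp.1, fun l hl => hl.1, ?_⟩
    intro p hp l hl heq
    obtain ⟨_, hpi, hpj⟩ := hp
    obtain ⟨_, hlij⟩ := hl
    dsimp only at hpi hpj hlij
    apply hlij
    have hmod : l.1 * p.1 + l.2 ≡ l.1 * i + l.2 [MOD n] := by
      refine Nat.ModEq.add_right _ (Nat.ModEq.mul_left _ ?_)
      show p.1 % n = i % n
      rw [← hpi, Nat.mod_mod_of_dvd _ dvd_rfl]
    calc (l.1 * i + l.2) % n = (l.1 * p.1 + l.2) % n := hmod.symm
      _ = p.2 % n := by rw [heq]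
      _ = j := hpj
  · intro p l hp hl hne
    have key : ∃ n ∈ N, (l.1 * p.1 + l.2) % n ≠ p.2 % n := by
      by_contra hcon
      push_neg at hcon
      set x := l.1 * p.1 + l.2 with hx
      set y := p.2 with hy
      have hxle : x ≤ 3 * m ^ 2 := by
        have h1 : l.1 * p.1 ≤ m * m := Nat.mul_le_mul hl.2.1 hp.2.1
        have h2 : l.2 ≤ 2 * m ^ 2 := hl.2.2.2
        have : m * m = m ^ 2 := (sq m).symm
        omega
      have hyle : y ≤ 2 * m ^ 2 := hp.2.2.2
      have hx1 : 1 ≤ x := by have := hl.2.2.1; omega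
      have hy1 : 1 ≤ y := hp.2.2.1
      obtain hle | hle := le_total x y
      all_goals {
        first
        | (set d := y - x with hd; have hlt : x < y := lt_of_le_of_ne hle hne)
        | (set d := x - y with hd
           have hlt : y < x := lt_of_le_of_ne hle (Ne.symm hne))
        have hdvd : ∀ n ∈ N, n ∣ d := by
          intro n hn
          have := hcon n hn
          first
          | exact (Nat.modEq_iff_dvd' hle).1 this
          | exact (Nat.modEq_iff_dvd' hle).1 this.symm
        have hge := aux_dvd k hk4 d (by omega)
          (hdvd 4 (Finset.mem_insert_self _ _))
          (fun q hq => hdvd q (Finset.mem_insert_of_mem hq))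
        omega
      }
    obtain ⟨n, hnN, hnne⟩ := key
    have hnk : n ≤ k := by
      rcases Finset.mem_insert.1 hnN with h | h
      · omega
      · have := (Finset.mem_filter.1 h).1
        simp only [Finset.mem_range] at this
        omega
    have hn0 : 0 < n := by
      rcases Finset.mem_insert.1 hnN with h | h
      · omega
      · exact (Finset.mem_filter.1 h).2.pos
    refine ⟨f (n, p.1 % n, p.2 % n), ?_, ⟨hp, rfl, rfl⟩, hl, ?_⟩
    · apply Finset.mem_image_of_mem
      simp only [Finset.mem_product, Finset.mem_range]
      exact ⟨hnN, lt_of_lt_of_le (Nat.mod_lt _ hn0) hnk,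
        lt_of_lt_of_le (Nat.mod_lt _ hn0) hnk⟩
    · show (l.1 * (p.1 % n) + l.2) % n ≠ p.2 % n
      intro hcontra
      apply hnne
      have hmod : l.1 * p.1 + l.2 ≡ l.1 * (p.1 % n) + l.2 [MOD n] := by
        refine Nat.ModEq.add_right _ (Nat.ModEq.mul_left _ ?_)
        exact (Nat.mod_mod_of_dvd _ dvd_rfl).symm
      calc (l.1 * p.1 + l.2) % n = (l.1 * (p.1 % n) + l.2) % n := hmod
        _ = p.2 % n := hcontra
end

section
/- Main theorem (explicit form): Let m be a positive integer, n = 2m³, and let k be a positive integer with 2m² < ∏_{q prime, q < k} q. Then the n × n Boolean point-line incidence matrix M simultaneously satisfies: (1) M has at least m⁴ = (n/2)^{4/3} zero entries; (2) M contains no 2×2 all-zero submatrix; and (3) the covering number of M is at most k⁴, i.e., all one-entries of M can be covered by at most k⁴ all-one combinatorial rectangles. -/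
/-- The index set `[m] × [2m²]` of points (and of lines), as a finset. -/
def indexSet (m : ℕ) : Finset (ℕ × ℕ) :=
  Finset.Icc 1 m ×ˢ Finset.Icc 1 (2 * m ^ 2)

/-- The point `p` lies on the line `ℓ` (i.e. the matrix entry `M_{p,ℓ}` is zero). -/
def OnLine (p ℓ : ℕ × ℕ) : Prop := ℓ.1 * p.1 + ℓ.2 = p.2

/-- The set of zero entries of the point-line incidence matrix `M`. -/
def zeroEntries (m : ℕ) : Finset ((ℕ × ℕ) × (ℕ × ℕ)) :=
  (indexSet m ×ˢ indexSet m).filter fun x => x.2.1 * x.1.1 + x.2.2 = x.1.2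

/-!
A one-entry `(p, ℓ)` means `ℓ₁p₁ + ℓ₂ ≠ p₂`. If some prime `q < k` separates these two numbers,
the entry lies in the all-one rectangle of points with residues `(a, b)` modulo `q` and lines
with `ℓ₁a + ℓ₂ ≢ b (mod q)`; there are at most `k³` such rectangles. Otherwise the two numbers
are congruent modulo `∏_{q<k} q > 2m² ≥ p₂`, so `ℓ₁p₁ + ℓ₂ > p₂ + 2m²`, which forces
`p₂ < m² < ℓ₂`: all these entries lie in one further rectangle.

The zero entries include the `m` points on each of the `m³` lines with `ℓ₂ ≤ m²`, and two
distinct lines share at most one point, so there is no `2 × 2` all-zero submatrix.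
-/

open Finset

lemma card_indexSet (m : ℕ) : (indexSet m).card = 2 * m ^ 3 := by
  simp [indexSet]
  ring

lemma pow_four_le_card_zeroEntries (m : ℕ) : m ^ 4 ≤ (zeroEntries m).card := by
  let flags : Finset ((ℕ × ℕ) × ℕ) := (Icc 1 m ×ˢ Icc 1 (m ^ 2)) ×ˢ Icc 1 m
  let toZeroEntry (t : (ℕ × ℕ) × ℕ) : (ℕ × ℕ) × (ℕ × ℕ) := ((t.2, t.1.1 * t.2 + t.1.2), t.1)
  have maps : Set.MapsTo toZeroEntry flags (zeroEntries m) := by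
    rintro ⟨⟨l₁, l₂⟩, x⟩ ht
    simp only [flags, coe_product, Set.mem_prod, coe_Icc, Set.mem_Icc] at ht
    obtain ⟨⟨⟨hl₁, hl₁'⟩, hl₂, hl₂'⟩, hx, hx'⟩ := ht
    have : l₁ * x ≤ m ^ 2 := by nlinarith
    simp only [toZeroEntry, zeroEntries, indexSet, coe_filter, Set.mem_ofPred_eq, mem_product,
      mem_Icc]
    refine ⟨⟨⟨⟨hx, hx'⟩, by omega, by omega⟩, ⟨hl₁, hl₁'⟩, hl₂, by omega⟩, trivial⟩
  have inj : Set.InjOn toZeroEntry flags := by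
    rintro ⟨⟨l₁, l₂⟩, x⟩ - ⟨⟨l₁', l₂'⟩, x'⟩ - h
    simp only [toZeroEntry, Prod.mk.injEq] at h
    obtain ⟨⟨rfl, -⟩, rfl, rfl⟩ := h
    rfl
  calc m ^ 4 = flags.card := by simp [flags]; ring
    _ ≤ (zeroEntries m).card := card_le_card_of_injOn toZeroEntry maps inj

lemma pow_three_rpow_four_div_three {x : ℝ} (hx : 0 ≤ x) : (x ^ 3) ^ ((4 : ℝ) / 3) = x ^ 4 := by
  rw [← Real.rpow_natCast x 3, ← Real.rpow_mul hx]
  norm_num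

lemma eq_of_mul_add_eq_mul_add {R : Type*} [CommRing R] [NoZeroDivisors R] {a b a' b' x x' : R}
    (hx : x ≠ x') (h : a * x + b = a' * x + b') (h' : a * x' + b = a' * x' + b') :
    a = a' ∧ b = b' := by
  have : (a - a') * (x - x') = 0 := by linear_combination h - h'
  have ha : a = a' := sub_eq_zero.mp ((mul_eq_zero.mp this).resolve_right (sub_ne_zero.mpr hx))
  subst ha
  exact ⟨rfl, add_left_cancel h⟩

lemma eq_of_onLine_of_onLine {p p' ℓ ℓ' : ℕ × ℕ} (hpp' : p ≠ p') (hpℓ : OnLine p ℓ)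
    (hp'ℓ : OnLine p' ℓ) (hpℓ' : OnLine p ℓ') (hp'ℓ' : OnLine p' ℓ') : ℓ = ℓ' := by
  unfold OnLine at *
  have hx : p.1 ≠ p'.1 := fun h => hpp' (Prod.ext h (by rw [← hpℓ, ← hp'ℓ, h]))
  have hℓ := eq_of_mul_add_eq_mul_add (R := ℤ) (a := ℓ.1) (b := ℓ.2) (a' := ℓ'.1) (b' := ℓ'.2)
    (x := p.1) (x' := p'.1)
    (by exact_mod_cast hx) (by exact_mod_cast hpℓ.trans hpℓ'.symm)
    (by exact_mod_cast hp'ℓ.trans hp'ℓ'.symm)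
  exact Prod.ext (by exact_mod_cast hℓ.1) (by exact_mod_cast hℓ.2)

lemma modEq_primorialLT {a b k : ℕ} (h : ∀ q, q.Prime → q < k → a ≡ b [MOD q]) :
    a ≡ b [MOD primorialLT k] := by
  wlog hab : a ≤ b generalizing a b
  · exact (this (fun q hq hqk => (h q hq hqk).symm) (le_of_not_ge hab)).symm
  rw [Nat.modEq_iff_dvd' hab]
  refine prod_primes_dvd _ (fun q hq => (mem_filter.mp hq).2.prime) fun q hq => ?_
  obtain ⟨hqk, hq⟩ := mem_filter.mp hq
  exact (h q hq (mem_range.mp hqk)).dvd'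

lemma two_le_of_one_lt_primorialLT {k : ℕ} (h : 1 < primorialLT k) : 2 ≤ k := by
  by_contra! hk
  interval_cases k <;> exact absurd h (by decide)

def IsOneRect (m : ℕ) (r : Set (ℕ × ℕ) × Set (ℕ × ℕ)) : Prop :=
  (∀ p ∈ r.1, InRange m p) ∧ (∀ ℓ ∈ r.2, InRange m ℓ) ∧ ∀ p ∈ r.1, ∀ ℓ ∈ r.2, ¬ OnLine p ℓ

def residueRect (m q a b : ℕ) : Set (ℕ × ℕ) × Set (ℕ × ℕ) :=
  ({p | InRange m p ∧ p.1 % q = a ∧ p.2 % q = b}, {ℓ | InRange m ℓ ∧ (ℓ.1 * a + ℓ.2) % q ≠ b})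

def highLineRect (m : ℕ) : Set (ℕ × ℕ) × Set (ℕ × ℕ) :=
  ({p | InRange m p ∧ p.2 ≤ m ^ 2}, {ℓ | InRange m ℓ ∧ m ^ 2 < ℓ.2})

lemma mul_mod_add_modEq (c x d q : ℕ) : c * (x % q) + d ≡ c * x + d [MOD q] :=
  ((Nat.mod_modEq x q).mul_left c).add_right d

lemma isOneRect_residueRect (m q a b : ℕ) : IsOneRect m (residueRect m q a b) := by
  refine ⟨fun p hp => hp.1, fun ℓ hℓ => hℓ.1, ?_⟩
  rintro p ⟨-, rfl, rfl⟩ ℓ ⟨-, hne⟩ hon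
  exact hne ((mul_mod_add_modEq ℓ.1 p.1 ℓ.2 q).trans (congrArg (· % q) hon))

lemma isOneRect_highLineRect (m : ℕ) : IsOneRect m (highLineRect m) := by
  refine ⟨fun p hp => hp.1, fun ℓ hℓ => hℓ.1, ?_⟩
  rintro p ⟨-, hp⟩ ℓ ⟨-, hℓ⟩ hon
  unfold OnLine at hon
  omega

noncomputable def rectCover (m k : ℕ) : Finset (Set (ℕ × ℕ) × Set (ℕ × ℕ)) :=
  insert (highLineRect m) ((range k ×ˢ range k ×ˢ range k).image fun t =>
    residueRect m t.1 t.2.1 t.2.2)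

lemma card_rectCover_le (m k : ℕ) : (rectCover m k).card ≤ k ^ 3 + 1 := by
  calc (rectCover m k).card
      ≤ ((range k ×ˢ range k ×ˢ range k).image fun t => residueRect m t.1 t.2.1 t.2.2).card + 1 :=
        card_insert_le _ _
    _ ≤ (range k ×ˢ range k ×ˢ range k).card + 1 := by gcongr; exact card_image_le
    _ = k ^ 3 + 1 := by simp; ring

lemma isOneRect_of_mem_rectCover {m k : ℕ} {r : Set (ℕ × ℕ) × Set (ℕ × ℕ)}
    (hr : r ∈ rectCover m k) : IsOneRect m r := by
  rcases mem_insert.mp hr with rfl | hr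
  · exact isOneRect_highLineRect m
  · obtain ⟨⟨q, a, b⟩, -, rfl⟩ := mem_image.mp hr
    exact isOneRect_residueRect m q a b

lemma exists_mem_rectCover_of_not_onLine {m k : ℕ} (hprim : 2 * m ^ 2 < primorialLT k)
    {p ℓ : ℕ × ℕ} (hp : InRange m p) (hℓ : InRange m ℓ) (hpℓ : ¬ OnLine p ℓ) :
    ∃ r ∈ rectCover m k, p ∈ r.1 ∧ ℓ ∈ r.2 := by
  by_cases hsep : ∃ q, q.Prime ∧ q < k ∧ ¬ ℓ.1 * p.1 + ℓ.2 ≡ p.2 [MOD q]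
  · obtain ⟨q, hq, hqk, hne⟩ := hsep
    have hres : p.1 % q < k ∧ p.2 % q < k :=
      ⟨(Nat.mod_lt _ hq.pos).trans hqk, (Nat.mod_lt _ hq.pos).trans hqk⟩
    refine ⟨residueRect m q (p.1 % q) (p.2 % q), mem_insert_of_mem (mem_image.mpr
      ⟨(q, p.1 % q, p.2 % q), by simp [hqk, hres], rfl⟩), ⟨hp, rfl, rfl⟩, hℓ, fun h => ?_⟩
    exact hne ((mul_mod_add_modEq ℓ.1 p.1 ℓ.2 q).symm.trans h)
  · push Not at hsep
    have hmod : ℓ.1 * p.1 + ℓ.2 ≡ p.2 [MOD primorialLT k] := modEq_primorialLT hsep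
    have hp₂ : p.2 ≤ 2 * m ^ 2 := hp.2.2.2
    have hℓ₂ : ℓ.2 ≤ 2 * m ^ 2 := hℓ.2.2.2
    have hlt : p.2 < ℓ.1 * p.1 + ℓ.2 := by
      rcases lt_or_gt_of_ne hpℓ with h | h
      · have := hmod.add_le_of_lt h
        omega
      · exact h
    have hfar := hmod.symm.add_le_of_lt hlt
    have : ℓ.1 * p.1 ≤ m ^ 2 := by nlinarith [hp.2.1, hℓ.2.1]
    exact ⟨highLineRect m, mem_insert_self _ _, ⟨hp, by omega⟩, ⟨hℓ, by omega⟩⟩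

theorem main_theorem_general (m n k : ℕ) (hm : 1 ≤ m) (hn : n = 2 * m ^ 3)
    (hprim : 2 * m ^ 2 < primorialLT k) :
    -- M is an n × n matrix
    (indexSet m).card = n ∧
    -- (1) at least m⁴ = (n/2)^{4/3} zero entries
    (m ^ 4 ≤ (zeroEntries m).card ∧ (m : ℝ) ^ 4 = ((n : ℝ) / 2) ^ ((4 : ℝ) / 3)) ∧
    -- (2) no 2 × 2 all-zero submatrix
    (∀ p p' ℓ ℓ' : ℕ × ℕ, InRange m p → InRange m p' → InRange m ℓ → InRange m ℓ' →
      p ≠ p' → ℓ ≠ ℓ' →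
      ¬ (OnLine p ℓ ∧ OnLine p' ℓ ∧ OnLine p ℓ' ∧ OnLine p' ℓ')) ∧
    -- (3) covering number at most k⁴
    (∃ R : Finset (Set (ℕ × ℕ) × Set (ℕ × ℕ)),
      R.card ≤ k ^ 4 ∧
      (∀ r ∈ R, (∀ p ∈ r.1, InRange m p) ∧ (∀ ℓ ∈ r.2, InRange m ℓ) ∧
        ∀ p ∈ r.1, ∀ ℓ ∈ r.2, ¬ OnLine p ℓ) ∧
      (∀ p ℓ : ℕ × ℕ, InRange m p → InRange m ℓ → ¬ OnLine p ℓ →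
        ∃ r ∈ R, p ∈ r.1 ∧ ℓ ∈ r.2)) := by
  subst hn
  have hk : 2 ≤ k := two_le_of_one_lt_primorialLT (by nlinarith)
  have hcard : k ^ 3 + 1 ≤ k ^ 4 := by nlinarith [Nat.one_le_pow 3 k (by omega)]
  refine ⟨card_indexSet m, ⟨pow_four_le_card_zeroEntries m, ?_⟩, ?_, ?_⟩
  · push_cast
    rw [mul_div_cancel_left₀ _ two_ne_zero, pow_three_rpow_four_div_three (Nat.cast_nonneg m)]
  · rintro p p' ℓ ℓ' - - - - hpp' hℓℓ' ⟨hpℓ, hp'ℓ, hpℓ', hp'ℓ'⟩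
    exact hℓℓ' (eq_of_onLine_of_onLine hpp' hpℓ hp'ℓ hpℓ' hp'ℓ')
  · exact ⟨rectCover m k, (card_rectCover_le m k).trans hcard,
      fun r hr => isOneRect_of_mem_rectCover hr,
      fun p ℓ hp hℓ hpℓ => exists_mem_rectCover_of_not_onLine hprim hp hℓ hpℓ⟩

/-- Main theorem (explicit form): for `n = 2m³` and `k` with `2m² < ∏_{q prime, q<k} q`,
the `n × n` point-line incidence matrix `M` has at least `m⁴ = (n/2)^{4/3}` zero
entries, has no `2 × 2` all-zero submatrix, and its one-entries can be covered by
at most `k⁴` all-one combinatorial rectangles. -/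
theorem main_theorem (m n k : ℕ) (hm : 1 ≤ m) (hn : n = 2 * m ^ 3)
    (hk : 1 ≤ k) (hprim : 2 * m ^ 2 < primorialLT k) :
    -- M is an n × n matrix
    (indexSet m).card = n ∧
    -- (1) at least m⁴ = (n/2)^{4/3} zero entries
    (m ^ 4 ≤ (zeroEntries m).card ∧ (m : ℝ) ^ 4 = ((n : ℝ) / 2) ^ ((4 : ℝ) / 3)) ∧
    -- (2) no 2 × 2 all-zero submatrix
    (∀ p p' ℓ ℓ' : ℕ × ℕ, InRange m p → InRange m p' → InRange m ℓ → InRange m ℓ' →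
      p ≠ p' → ℓ ≠ ℓ' →
      ¬ (OnLine p ℓ ∧ OnLine p' ℓ ∧ OnLine p ℓ' ∧ OnLine p' ℓ')) ∧
    -- (3) covering number at most k⁴
    (∃ R : Finset (Set (ℕ × ℕ) × Set (ℕ × ℕ)),
      R.card ≤ k ^ 4 ∧
      (∀ r ∈ R, (∀ p ∈ r.1, InRange m p) ∧ (∀ ℓ ∈ r.2, InRange m ℓ) ∧
        ∀ p ∈ r.1, ∀ ℓ ∈ r.2, ¬ OnLine p ℓ) ∧
      (∀ p ℓ : ℕ × ℕ, InRange m p → InRange m ℓ → ¬ OnLine p ℓ →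
        ∃ r ∈ R, p ∈ r.1 ∧ ℓ ∈ r.2)) :=
  main_theorem_general m n k hm hn hprim
end
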